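/- For every λ ≥ 0 and every n ≥ 1, the Laplace transform of T_n is given by the infinite product E[e^{−λ T_n}] = ∏_{i=n+1}^∞ C(i,2)/(C(i,2) + λ), where C(i,2) = i(i−1)/2. -/

import Mathlib

/-!
`T n = ∑_{i > n} S i / C(i, 2)` is a series of independent nonnegative terms with summable means,
so it converges almost surely (this matters: `∑'` is `0` on non-summable sequences). For finitely
many independent terms the Laplace transform factorises, and `S i / C(i, 2)` has Laplace transform
`C(i, 2) / (C(i, 2) + λ)`. Since every integrand `exp (-λ ∑ …)` lies in `[0, 1]`, dominated
convergence carries the factorisation over to the whole series.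
-/

open MeasureTheory ProbabilityTheory Filter Set Real
open scoped ENNReal

namespace ProbabilityTheory

variable {r t : ℝ}

lemma expMeasure_eq_withDensity (r : ℝ) : expMeasure r = volume.withDensity (exponentialPDF r) :=
  rfl

lemma measurable_exponentialPDF (r : ℝ) : Measurable (exponentialPDF r) :=
  (measurable_exponentialPDFReal r).ennreal_ofReal

lemma toReal_exponentialPDF_mul_exp (hr : 0 ≤ r) (t x : ℝ) :
    (exponentialPDF r x).toReal * exp (t * x) =
      (Ici 0).indicator (fun x ↦ r * exp ((t - r) * x)) x := by
  by_cases hx : 0 ≤ x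
  · rw [exponentialPDF_eq, if_pos hx, ENNReal.toReal_ofReal (by positivity),
      indicator_of_mem (mem_Ici.2 hx), mul_assoc, ← exp_add]
    ring_nf
  · simp [exponentialPDF_eq, hx]

lemma integrable_exp_mul_expMeasure (hr : 0 < r) (ht : t < r) :
    Integrable (fun x ↦ exp (t * x)) (expMeasure r) := by
  rw [expMeasure_eq_withDensity, integrable_withDensity_iff_integrable_smul'
    (measurable_exponentialPDF r) (ae_of_all _ fun _ ↦ ENNReal.ofReal_lt_top)]
  simp_rw [smul_eq_mul, toReal_exponentialPDF_mul_exp hr.le]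
  rw [integrable_indicator_iff measurableSet_Ici, integrableOn_Ici_iff_integrableOn_Ioi]
  exact (integrableOn_exp_mul_Ioi (by linarith) 0).const_mul r

lemma mgf_id_expMeasure (hr : 0 < r) (ht : t < r) : mgf id (expMeasure r) t = r / (r - t) := by
  rw [mgf, expMeasure_eq_withDensity, integral_withDensity_eq_integral_toReal_smul
    (measurable_exponentialPDF r) (ae_of_all _ fun _ ↦ ENNReal.ofReal_lt_top)]
  simp_rw [id, smul_eq_mul, toReal_exponentialPDF_mul_exp hr.le,
    integral_indicator measurableSet_Ici, integral_Ici_eq_integral_Ioi, integral_const_mul,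
    integral_exp_mul_Ioi (sub_neg.2 ht)]
  rw [mul_zero, exp_zero, neg_div, ← div_neg, neg_sub, mul_one_div]

lemma integrable_id_expMeasure (hr : 0 < r) : Integrable id (expMeasure r) := by
  refine integrable_of_mem_interior_integrableExpSet (mem_interior_iff_mem_nhds.2 ?_)
  exact mem_of_superset (Iio_mem_nhds hr) fun t ht ↦ integrable_exp_mul_expMeasure hr ht

lemma ae_nonneg_expMeasure (r : ℝ) : ∀ᵐ x ∂expMeasure r, 0 ≤ x := by
  simp_rw [ae_iff, not_le]
  change expMeasure r (Iio 0) = 0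
  rw [expMeasure_eq_withDensity, withDensity_apply _ measurableSet_Iio]
  exact lintegral_exponentialPDF_of_nonpos le_rfl

variable {Ω : Type*} [MeasurableSpace Ω] {μ : Measure Ω} {S : Ω → ℝ}

lemma aemeasurable_of_map_eq_expMeasure (hr : 0 < r) (hS : μ.map S = expMeasure r) :
    AEMeasurable S μ :=
  .of_map_ne_zero (hS ▸ (isProbabilityMeasure_expMeasure hr).ne_zero)

lemma ae_nonneg_of_map_eq_expMeasure (hr : 0 < r) (hS : μ.map S = expMeasure r) : 0 ≤ᵐ[μ] S :=
  ae_of_ae_map (p := (0 ≤ ·)) (aemeasurable_of_map_eq_expMeasure hr hS)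
    (hS ▸ ae_nonneg_expMeasure r)

lemma integrable_of_map_eq_expMeasure (hr : 0 < r) (hS : μ.map S = expMeasure r) :
    Integrable S μ :=
  (integrable_map_measure aestronglyMeasurable_id (aemeasurable_of_map_eq_expMeasure hr hS)).1
    (hS ▸ integrable_id_expMeasure hr)

lemma integral_of_map_eq_expMeasure (hr : 0 < r) (hS : μ.map S = expMeasure r) :
    ∫ ω, S ω ∂μ = ∫ x, x ∂expMeasure r := by
  rw [← hS]
  exact (integral_map (aemeasurable_of_map_eq_expMeasure hr hS) aestronglyMeasurable_id).symm

lemma mgf_of_map_eq_expMeasure (hr : 0 < r) (hS : μ.map S = expMeasure r) (ht : t < r) :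
    mgf S μ t = r / (r - t) := by
  rw [← mgf_id_map (aemeasurable_of_map_eq_expMeasure hr hS), hS, mgf_id_expMeasure hr ht]

variable {ι : Type*} [Countable ι] {X : ι → Ω → ℝ}

lemma ae_summable_of_summable_integral (h_int : ∀ i, Integrable (X i) μ)
    (h_nonneg : ∀ i, 0 ≤ᵐ[μ] X i) (h_sum : Summable fun i ↦ ∫ ω, X i ω ∂μ) :
    ∀ᵐ ω ∂μ, Summable fun i ↦ X i ω := by
  have h_meas : AEMeasurable (fun ω ↦ ∑' i, ENNReal.ofReal (X i ω)) μ :=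
    .tsum fun i ↦ (h_int i).aemeasurable.ennreal_ofReal
  have h_fin : ∫⁻ ω, ∑' i, ENNReal.ofReal (X i ω) ∂μ ≠ ∞ := by
    rw [lintegral_tsum fun i ↦ (h_int i).aemeasurable.ennreal_ofReal]
    simp_rw [← ofReal_integral_eq_lintegral_ofReal (h_int _) (h_nonneg _)]
    rw [← ENNReal.ofReal_tsum_of_nonneg (fun i ↦ integral_nonneg_of_ae (h_nonneg i)) h_sum]
    exact ENNReal.ofReal_ne_top
  filter_upwards [ae_lt_top' h_meas h_fin, ae_all_iff.2 h_nonneg] with ω hω hω_nonneg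
  exact (ENNReal.summable_toReal hω.ne).congr fun i ↦ ENNReal.toReal_ofReal (hω_nonneg i)

lemma iIndepFun.hasProd_mgf_tsum (h_indep : iIndepFun X μ) (h_meas : ∀ i, AEMeasurable (X i) μ)
    (h_nonneg : ∀ i, 0 ≤ᵐ[μ] X i) (h_sum : ∀ᵐ ω ∂μ, Summable fun i ↦ X i ω) (ht : t ≤ 0) :
    HasProd (fun i ↦ mgf (X i) μ t) (mgf (fun ω ↦ ∑' i, X i ω) μ t) := by
  have := h_indep.isProbabilityMeasure
  refine (tendsto_integral_filter_of_dominated_convergence (fun _ ↦ 1) ?_ ?_ (integrable_const 1)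
    ?_).congr fun s ↦ h_indep.mgf_sum₀ h_meas s
  · exact .of_forall fun s ↦
      ((s.aemeasurable_sum fun i _ ↦ h_meas i).const_mul t).exp.aestronglyMeasurable
  · refine .of_forall fun s ↦ ?_
    filter_upwards [ae_all_iff.2 h_nonneg] with ω hω
    rw [norm_of_nonneg (exp_pos _).le, exp_le_one_iff, Finset.sum_apply]
    exact mul_nonpos_of_nonpos_of_nonneg ht (s.sum_nonneg fun i _ ↦ hω i)
  · filter_upwards [h_sum] with ω hω
    simp_rw [Finset.sum_apply]
    exact ((continuous_const.mul continuous_id).rexp.tendsto _).comp hω.hasSum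

variable {a : ι → ℝ}

lemma iIndepFun.hasProd_mgf_tsum_mul_of_map_eq_expMeasure (h_indep : iIndepFun X μ)
    (hX : ∀ i, μ.map (X i) = expMeasure r) (hr : 0 < r) (ha : ∀ i, 0 ≤ a i) (ha_sum : Summable a)
    (ht : t ≤ 0) :
    HasProd (fun i ↦ r / (r - a i * t)) (mgf (fun ω ↦ ∑' i, a i * X i ω) μ t) := by
  have h_meas i : AEMeasurable (X i) μ := aemeasurable_of_map_eq_expMeasure hr (hX i)
  have h_nonneg i : 0 ≤ᵐ[μ] fun ω ↦ a i * X i ω := by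
    filter_upwards [ae_nonneg_of_map_eq_expMeasure hr (hX i)] with ω hω
    exact mul_nonneg (ha i) hω
  have h_sum : ∀ᵐ ω ∂μ, Summable fun i ↦ a i * X i ω := by
    refine ae_summable_of_summable_integral
      (fun i ↦ (integrable_of_map_eq_expMeasure hr (hX i)).const_mul (a i)) h_nonneg ?_
    simp_rw [integral_const_mul, integral_of_map_eq_expMeasure hr (hX _)]
    exact ha_sum.mul_right _
  have h_mgf i : mgf (fun ω ↦ a i * X i ω) μ t = r / (r - a i * t) := by
    rw [mgf_const_mul, mgf_of_map_eq_expMeasure hr (hX i)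
      (by nlinarith [mul_nonpos_of_nonneg_of_nonpos (ha i) ht])]
  simpa only [Function.comp_def, h_mgf] using
    (h_indep.comp (fun i x ↦ a i * x) fun i ↦ by fun_prop).hasProd_mgf_tsum
      (fun i ↦ (h_meas i).const_mul (a i)) h_nonneg h_sum ht

end ProbabilityTheory

lemma cast_mul_cast_sub_one_nonneg (i : ℕ) : 0 ≤ (i : ℝ) * ((i : ℝ) - 1) := by
  rcases i with _ | i
  · simp
  · push_cast
    rw [add_sub_cancel_right]
    positivity

lemma summable_two_div_mul_sub_one : Summable fun i : ℕ ↦ 2 / ((i : ℝ) * ((i : ℝ) - 1)) := by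
  refine (summable_nat_add_iff 2).1 <| .of_nonneg_of_le
    (fun i ↦ div_nonneg zero_le_two (cast_mul_cast_sub_one_nonneg _)) (fun i ↦ ?_)
    (((summable_nat_add_iff 1).2 (Real.summable_one_div_nat_pow.2 one_lt_two)).mul_left 2)
  push_cast
  rw [mul_one_div]
  exact div_le_div_of_nonneg_left zero_le_two (by positivity) (by nlinarith)

/-- `1 / C(i, 2)` for `i > n`, so that `T n = ∑' i, kingmanWeight n i * S i`. -/
noncomputable def kingmanWeight (n i : ℕ) : ℝ :=
  if n + 1 ≤ i then 2 / ((i : ℝ) * ((i : ℝ) - 1)) else 0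

lemma kingmanWeight_nonneg (n i : ℕ) : 0 ≤ kingmanWeight n i := by
  unfold kingmanWeight
  split_ifs
  exacts [div_nonneg zero_le_two (cast_mul_cast_sub_one_nonneg i), le_rfl]

lemma summable_kingmanWeight (n : ℕ) : Summable (kingmanWeight n) := by
  refine .of_nonneg_of_le (kingmanWeight_nonneg n) (fun i ↦ ?_) summable_two_div_mul_sub_one
  unfold kingmanWeight
  split_ifs
  exacts [le_rfl, div_nonneg zero_le_two (cast_mul_cast_sub_one_nonneg i)]

lemma kingmanWeight_mul (n i : ℕ) (x : ℝ) :
    kingmanWeight n i * x = if n + 1 ≤ i then 2 * x / ((i : ℝ) * ((i : ℝ) - 1)) else 0 := by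
  rw [kingmanWeight, ite_mul, zero_mul, div_mul_eq_mul_div]

lemma one_div_one_add_kingmanWeight_mul {i : ℕ} (hi : 2 ≤ i) (n : ℕ) {l : ℝ} (hl : 0 ≤ l) :
    1 / (1 + kingmanWeight n i * l) = if n + 1 ≤ i then
      ((i : ℝ) * ((i : ℝ) - 1) / 2) / ((i : ℝ) * ((i : ℝ) - 1) / 2 + l) else 1 := by
  have hi' : (2 : ℝ) ≤ i := by exact_mod_cast hi
  have hd : 0 < (i : ℝ) * ((i : ℝ) - 1) := by nlinarith
  unfold kingmanWeight
  split_ifs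
  · generalize (i : ℝ) * ((i : ℝ) - 1) = d at hd ⊢
    have : 0 < d + 2 * l := by linarith
    field_simp
  · simp

theorem kingman_Tn_laplace_transform_general
    {Ω : Type*} [MeasurableSpace Ω] (μ : Measure Ω)
    (S : ℕ → Ω → ℝ)
    (hindep : iIndepFun
      (fun i : {i : ℕ // 2 ≤ i} => S i) μ)
    (hexp : ∀ i : ℕ, 2 ≤ i → μ.map (S i) = expMeasure 1)
    (T : ℕ → Ω → ℝ)
    (hT : ∀ n ω, T n ω
      = ∑' i : ℕ, if n + 1 ≤ i then 2 * S i ω / ((i : ℝ) * ((i : ℝ) - 1)) else 0) :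
    ∀ l : ℝ, 0 ≤ l → ∀ n : ℕ, 1 ≤ n →
      ∫ ω, Real.exp (-(l * T n ω)) ∂μ
        = ∏' i : ℕ, if n + 1 ≤ i then
            ((i : ℝ) * ((i : ℝ) - 1) / 2) / ((i : ℝ) * ((i : ℝ) - 1) / 2 + l)
          else 1 := by
  intro l hl n hn
  have h_out {i : ℕ} (hi : i ∉ {i : ℕ | 2 ≤ i}) : ¬n + 1 ≤ i :=
    fun h ↦ hi (by change 2 ≤ i; omega)
  have hT_eq ω : T n ω = ∑' j : {i // 2 ≤ i}, kingmanWeight n j * S j ω := by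
    simp_rw [hT, kingmanWeight_mul]
    exact (tsum_subtype_eq_of_support_subset
      (Function.support_subset_iff'.2 fun i hi ↦ if_neg (h_out hi))).symm
  have hterm (j : {i // 2 ≤ i}) := one_div_one_add_kingmanWeight_mul j.2 n hl
  have hprod := hindep.hasProd_mgf_tsum_mul_of_map_eq_expMeasure (fun j ↦ hexp j j.2) one_pos
    (fun j ↦ kingmanWeight_nonneg n j) ((summable_kingmanWeight n).subtype _) (neg_nonpos.2 hl)
  simp only [mgf, neg_mul, ← hT_eq, mul_neg, sub_neg_eq_add, hterm] at hprod
  rw [← tprod_subtype_eq_of_mulSupport_subset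
    (Function.mulSupport_subset_iff'.2 fun i hi ↦ if_neg (h_out hi))]
  exact hprod.tprod_eq.symm

/-- The Laplace transform of the Kingman coalescent time `T n` is the infinite
product `E[e^{−λ T n}] = ∏_{i=n+1}^∞ C(i,2)/(C(i,2) + λ)` where `C(i,2) = i(i−1)/2`. -/
theorem kingman_Tn_laplace_transform
    {Ω : Type*} [MeasurableSpace Ω] (μ : Measure Ω) [IsProbabilityMeasure μ]
    (S : ℕ → Ω → ℝ)
    (hindep : iIndepFun
      (fun i : {i : ℕ // 2 ≤ i} => S i) μ)
    (hexp : ∀ i : ℕ, 2 ≤ i → μ.map (S i) = expMeasure 1)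
    (T : ℕ → Ω → ℝ)
    (hT : ∀ n ω, T n ω
      = ∑' i : ℕ, if n + 1 ≤ i then 2 * S i ω / ((i : ℝ) * ((i : ℝ) - 1)) else 0) :
    ∀ l : ℝ, 0 ≤ l → ∀ n : ℕ, 1 ≤ n →
      ∫ ω, Real.exp (-(l * T n ω)) ∂μ
        = ∏' i : ℕ, if n + 1 ≤ i then
            ((i : ℝ) * ((i : ℝ) - 1) / 2) / ((i : ℝ) * ((i : ℝ) - 1) / 2 + l)
          else 1 :=
  kingman_Tn_laplace_transform_general μ S hindep hexp T hT
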